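/- Let n ≥ 1 be an integer, C₁, C₂ ∈ ℝ, σ² > 0, and define b : {θ ∈ ℝⁿ : θ ≠ 0, C₁‖θ‖₂ + C₂‖θ‖₂^{−1} ≠ 0} → ℝⁿ by b(θ) = σ²·[2 − n + 2(C₁‖θ‖₂ − C₂‖θ‖₂^{−1})/(C₁‖θ‖₂ + C₂‖θ‖₂^{−1})]·θ/‖θ‖₂². Then for every θ₀ ≠ 0 with C₁‖θ₀‖₂ + C₂‖θ₀‖₂^{−1} ≠ 0, the function b is differentiable at θ₀ and ‖b(θ₀)‖₂² + 2σ²·Tr(Db(θ₀)) = (4n − n²)(σ²)²/‖θ₀‖₂², where Db(θ₀) is the Jacobian matrix of b at θ₀ and Tr denotes the trace. -/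

import Mathlib

/-!
The map `b` is radial: `b θ = φ(‖θ‖²) • θ` with `φ s = σ²(2 - n + 2(C₁s - C₂)/(C₁s + C₂))/s`.
Hence `Db(θ) = φ(s) I + 2φ'(s) θθᵀ` with `s = ‖θ‖²`, so `Tr Db(θ) = nφ(s) + 2sφ'(s)` and
`‖b θ‖² = sφ(s)²`. Since `2 + 2(u - v)/(u + v) = 4u/(u + v)`, the profile is
`φ s = σ²(4C₁/(C₁s + C₂) - n/s)`, and in `sφ² + 2σ²(nφ + 2sφ')` every term involving
`C₁/(C₁s + C₂)` cancels, leaving `(4n - n²)σ⁴/s`.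
-/

/-- The bias correction term
b(θ) = σ²[2 − n + 2(C₁‖θ‖ − C₂‖θ‖⁻¹)/(C₁‖θ‖ + C₂‖θ‖⁻¹)]·θ/‖θ‖². -/
noncomputable def bFun (n : ℕ) (C₁ C₂ σ2 : ℝ) (θ : EuclideanSpace ℝ (Fin n)) :
    EuclideanSpace ℝ (Fin n) :=
  (σ2 * (2 - (n : ℝ)
      + 2 * (C₁ * ‖θ‖ - C₂ * ‖θ‖⁻¹) / (C₁ * ‖θ‖ + C₂ * ‖θ‖⁻¹)) / ‖θ‖ ^ 2) • θ

/-- The trace of the Jacobian of a map `ℝⁿ → ℝⁿ` at a point. -/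
noncomputable def jacobianTrace {n : ℕ}
    (b : EuclideanSpace ℝ (Fin n) → EuclideanSpace ℝ (Fin n))
    (θ : EuclideanSpace ℝ (Fin n)) : ℝ :=
  ∑ i : Fin n, fderiv ℝ b θ (EuclideanSpace.single i 1) i

theorem HasDerivAt.hasFDerivAt_smul_norm_sq {E : Type*} [NormedAddCommGroup E]
    [InnerProductSpace ℝ E] {φ : ℝ → ℝ} {φ' : ℝ} {x : E} (h : HasDerivAt φ φ' (‖x‖ ^ 2)) :
    HasFDerivAt (fun y : E => φ (‖y‖ ^ 2) • y)
      (φ (‖x‖ ^ 2) • ContinuousLinearMap.id ℝ E + (2 * φ') • (innerSL ℝ x).smulRight x) x := by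
  refine ((h.comp_hasFDerivAt x (hasStrictFDerivAt_norm_sq x).hasFDerivAt).smul
    (hasFDerivAt_id x)).congr_fderiv ?_
  ext y
  simp [mul_smul, smul_comm φ']

theorem jacobianTrace_smul_norm_sq {n : ℕ} {φ : ℝ → ℝ} {φ' : ℝ}
    {θ : EuclideanSpace ℝ (Fin n)} (h : HasDerivAt φ φ' (‖θ‖ ^ 2)) :
    jacobianTrace (fun y => φ (‖y‖ ^ 2) • y) θ = n * φ (‖θ‖ ^ 2) + 2 * φ' * ‖θ‖ ^ 2 := by
  rw [jacobianTrace, h.hasFDerivAt_smul_norm_sq.fderiv, EuclideanSpace.real_norm_sq_eq]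
  simp [EuclideanSpace.inner_single_right, Finset.sum_add_distrib, Finset.mul_sum, mul_assoc, sq]

theorem mul_add_mul_inv_eq_div (a b r : ℝ) : a * r + b * r⁻¹ = (a * r ^ 2 + b) / r := by
  rcases eq_or_ne r 0 with rfl | hr
  · simp
  · field_simp

noncomputable def biasProfile (n : ℕ) (C₁ C₂ σ2 s : ℝ) : ℝ :=
  σ2 * (2 - n + 2 * (C₁ * s - C₂) / (C₁ * s + C₂)) / s

theorem bFun_eq_biasProfile (n : ℕ) (C₁ C₂ σ2 : ℝ) :
    bFun n C₁ C₂ σ2 = fun θ => biasProfile n C₁ C₂ σ2 (‖θ‖ ^ 2) • θ := by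
  funext θ
  rcases eq_or_ne ‖θ‖ 0 with h | h
  · simp [bFun, biasProfile, h]
  · have hsub : C₁ * ‖θ‖ - C₂ * ‖θ‖⁻¹ = (C₁ * ‖θ‖ ^ 2 - C₂) / ‖θ‖ := by field_simp
    rw [bFun, biasProfile, hsub, mul_add_mul_inv_eq_div, ← mul_div_assoc,
      div_div_div_cancel_right₀ h]

theorem biasProfile_eq {n : ℕ} {C₁ C₂ σ2 s : ℝ} (hs : s ≠ 0) (hD : C₁ * s + C₂ ≠ 0) :
    biasProfile n C₁ C₂ σ2 s = σ2 * (4 * C₁ / (C₁ * s + C₂) - n / s) := by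
  rw [biasProfile]
  field_simp
  ring

theorem hasDerivAt_biasProfile (n : ℕ) (C₁ C₂ σ2 : ℝ) {s : ℝ} (hs : s ≠ 0)
    (hD : C₁ * s + C₂ ≠ 0) :
    HasDerivAt (biasProfile n C₁ C₂ σ2) (σ2 * (n / s ^ 2 - 4 * C₁ ^ 2 / (C₁ * s + C₂) ^ 2)) s := by
  have hnum : HasDerivAt (fun t => 2 * (C₁ * t - C₂)) (2 * C₁) s := by
    simpa using (((hasDerivAt_id s).const_mul C₁).sub_const C₂).const_mul 2
  have hden : HasDerivAt (fun t => C₁ * t + C₂) C₁ s := by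
    simpa using ((hasDerivAt_id s).const_mul C₁).add_const C₂
  refine ((((hnum.div hden hD).const_add (2 - (n : ℝ))).const_mul σ2).div
    (hasDerivAt_id s) hs).congr_deriv ?_
  simp only [id, Pi.div_apply]
  field_simp
  ring

theorem stmt2_general (n : ℕ) (C₁ C₂ σ2 : ℝ)
    (θ₀ : EuclideanSpace ℝ (Fin n)) (hθ₀ : θ₀ ≠ 0)
    (hC : C₁ * ‖θ₀‖ + C₂ * ‖θ₀‖⁻¹ ≠ 0) :
    DifferentiableAt ℝ (bFun n C₁ C₂ σ2) θ₀ ∧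
    ‖bFun n C₁ C₂ σ2 θ₀‖ ^ 2 + 2 * σ2 * jacobianTrace (bFun n C₁ C₂ σ2) θ₀
      = (4 * n - n ^ 2) * σ2 ^ 2 / ‖θ₀‖ ^ 2 := by
  have hs : ‖θ₀‖ ^ 2 ≠ 0 := pow_ne_zero 2 (norm_ne_zero_iff.mpr hθ₀)
  have hD : C₁ * ‖θ₀‖ ^ 2 + C₂ ≠ 0 := by
    rw [mul_add_mul_inv_eq_div] at hC
    exact (div_ne_zero_iff.mp hC).1
  have hφ := hasDerivAt_biasProfile n C₁ C₂ σ2 hs hD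
  rw [bFun_eq_biasProfile]
  refine ⟨hφ.hasFDerivAt_smul_norm_sq.differentiableAt, ?_⟩
  rw [jacobianTrace_smul_norm_sq hφ, norm_smul, mul_pow, Real.norm_eq_abs, sq_abs,
    biasProfile_eq hs hD]
  field_simp
  ring

theorem stmt2 (n : ℕ) (hn : 1 ≤ n) (C₁ C₂ σ2 : ℝ) (hσ2 : 0 < σ2)
    (θ₀ : EuclideanSpace ℝ (Fin n)) (hθ₀ : θ₀ ≠ 0)
    (hC : C₁ * ‖θ₀‖ + C₂ * ‖θ₀‖⁻¹ ≠ 0) :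
    DifferentiableAt ℝ (bFun n C₁ C₂ σ2) θ₀ ∧
    ‖bFun n C₁ C₂ σ2 θ₀‖ ^ 2 + 2 * σ2 * jacobianTrace (bFun n C₁ C₂ σ2) θ₀
      = (4 * n - n ^ 2) * σ2 ^ 2 / ‖θ₀‖ ^ 2 :=
  stmt2_general n C₁ C₂ σ2 θ₀ hθ₀ hC
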